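/- Let (K, δ) be a nondegenerate differential field (for every nonzero f ∈ K{x} there is a ∈ K with f(a) ≠ 0) of characteristic p > 0. Then [K : C_K] is infinite. Conversely, if [K : C_K] is infinite then (K, δ) is nondegenerate. -/

import Mathlib

set_option synthInstance.maxHeartbeats 1000000
set_option maxHeartbeats 1000000

open MvPolynomial
noncomputable section
variable {K : Type*} [Field K]

/-- order of a differential polynomial -/
def ordOf (f : MvPolynomial ℕ K) : ℕ := f.vars.sup id

/-- separant -/
def sep (f : MvPolynomial ℕ K) : MvPolynomial ℕ K := pderiv (ordOf f) f

/-- rank of a differential polynomial -/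
def rankOf (f : MvPolynomial ℕ K) : ℕ × ℕ := (ordOf f, f.degreeOf (ordOf f))

/-- the differential ideal generated by f -/
def diffIdeal (D : Derivation ℤ (MvPolynomial ℕ K) (MvPolynomial ℕ K))
    (f : MvPolynomial ℕ K) : Ideal (MvPolynomial ℕ K) :=
  Ideal.span (Set.range fun n : ℕ => (⇑D)^[n] f)

/-- saturation I : s^∞ -/
def saturation {R : Type*} [CommRing R] (J : Ideal R) (s : R) : Ideal R where
  carrier := {h | ∃ m : ℕ, s ^ m * h ∈ J}
  zero_mem' := ⟨0, by simp⟩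
  add_mem' := by
    rintro a b ⟨m, hm⟩ ⟨n, hn⟩
    refine ⟨m + n, ?_⟩
    have h : s ^ (m + n) * (a + b) = s ^ n * (s ^ m * a) + s ^ m * (s ^ n * b) := by ring
    rw [h]
    exact J.add_mem (J.mul_mem_left _ hm) (J.mul_mem_left _ hn)
  smul_mem' := by
    rintro c a ⟨m, hm⟩
    refine ⟨m, ?_⟩
    have h : s ^ m * (c • a) = c * (s ^ m * a) := by rw [smul_eq_mul]; ring
    rw [h]
    exact J.mul_mem_left _ hm

/-- evaluation of a differential polynomial at a point of K -/
def evalD (δ : Derivation ℤ K K) (a : K) (f : MvPolynomial ℕ K) : K :=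
  MvPolynomial.eval (fun n => (⇑δ)^[n] a) f

/-- the field of constants -/
def constants (δ : Derivation ℤ K K) : Subfield K where
  carrier := {a | δ a = 0}
  zero_mem' := by simp
  one_mem' := by simp
  add_mem' := by intro a b ha hb; simp only [Set.mem_setOf_eq] at *; rw [map_add, ha, hb, add_zero]
  mul_mem' := by
    intro a b ha hb; simp only [Set.mem_setOf_eq] at *
    rw [Derivation.leibniz, ha, hb]; simp
  neg_mem' := by intro a ha; simp only [Set.mem_setOf_eq] at *; rw [map_neg, ha, neg_zero]
  inv_mem' := by
    intro a ha
    simp only [Set.mem_setOf_eq] at *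
    rcases eq_or_ne a 0 with rfl | h
    · simp
    · have h1 : a * a⁻¹ = 1 := mul_inv_cancel₀ h
      have h2 : δ (a * a⁻¹) = 0 := by rw [h1]; exact δ.map_one_eq_zero
      rw [Derivation.leibniz, ha] at h2
      simp only [smul_eq_mul, mul_zero, add_zero, zero_mul, smul_zero] at h2
      exact (mul_eq_zero.mp h2).resolve_left h

/-- the SDCF axiom scheme -/
def SDCFAx (δ : Derivation ℤ K K) : Prop :=
  ∀ f g : MvPolynomial ℕ K, f ≠ 0 → g ≠ 0 → sep f ≠ 0 → ordOf g < ordOf f →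
    ∃ a : K, evalD δ a f = 0 ∧ evalD δ a g ≠ 0

/-! The Wronskian of `b₀, …, bₙ` is invertible as soon as the `bⱼ` are linearly independent over
the constants. Hence, if `[K : C_K]` is infinite, a nonzero differential polynomial `f` of order
`n` becomes, after substituting `Σⱼ cⱼ δᵏ bⱼ` for `x⁽ᵏ⁾` (`k ≤ n`), a nonzero polynomial `g` in
`c₀, …, cₙ`; in characteristic `p` the constants contain `Kᵖ` and are infinite, so `g` does not
vanish at some constant point `c`, i.e. `f(Σⱼ cⱼ bⱼ) ≠ 0`. Conversely, if `[K : C_K] ≤ n` then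
`a, δa, …, δⁿa` are dependent over the constants for every `a`, so the Hankel determinant
`det (x⁽ⁱ⁺ʲ⁾)_{i,j ≤ n}` vanishes identically on `K`. -/

section

variable (δ : Derivation ℤ K K)

theorem iterate_sum_mul_of_mem_constants {ι : Type*} [Fintype ι] {c : ι → K}
    (hc : ∀ j, c j ∈ constants δ) (b : ι → K) (k : ℕ) :
    (⇑δ)^[k] (∑ j, c j * b j) = ∑ j, c j * (⇑δ)^[k] (b j) := by
  induction k with
  | zero => rfl
  | succ k ih =>
    simp only [Function.iterate_succ_apply', ih, map_sum]
    refine Finset.sum_congr rfl fun j _ => ?_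
    have hδc : δ (c j) = 0 := hc j
    simp [Derivation.leibniz, hδc]

theorem sum_deriv_mul_iterate_eq_zero {ι : Type*} [Fintype ι] (l b : ι → K) (i : ℕ)
    (h₀ : ∑ j, l j * (⇑δ)^[i] (b j) = 0) (h₁ : ∑ j, l j * (⇑δ)^[i + 1] (b j) = 0) :
    ∑ j, δ (l j) * (⇑δ)^[i] (b j) = 0 := by
  have h := congrArg δ h₀
  simp only [Function.iterate_succ_apply'] at h₁
  simpa [Derivation.leibniz, Finset.sum_add_distrib, mul_comm, h₁] using h

theorem eq_zero_of_forall_sum_mul_iterate_eq_zero :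
    ∀ {m : ℕ} {b : Fin m → K}, LinearIndependent (constants δ) b → ∀ l : Fin m → K,
      (∀ i < m, ∑ j, l j * (⇑δ)^[i] (b j) = 0) → l = 0 := by
  intro m
  induction m with
  | zero => intro b _ l _; exact Subsingleton.elim _ _
  | succ m ih =>
    intro b hb l hl
    have eq_zero_of_head_eq_zero : ∀ μ : Fin (m + 1) → K,
        (∀ i < m, ∑ j, μ j * (⇑δ)^[i] (b j) = 0) → μ 0 = 0 → μ = 0 := by
      intro μ hμ hμ0
      have := ih (hb.comp Fin.succ (Fin.succ_injective _)) (fun j => μ j.succ) fun i hi => by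
        simpa [Fin.sum_univ_succ, hμ0] using hμ i hi
      exact funext (Fin.cases hμ0 (congrFun this))
    by_contra hl0
    have hl₀ : l 0 ≠ 0 := fun h => hl0 (eq_zero_of_head_eq_zero l (fun i hi => hl i (by omega)) h)
    -- After normalising `c 0 = 1`, differentiating the relations shows that `δ c` satisfies
    -- the first `m` of them and has `δ c 0 = 0`, so `c` is a nontrivial constant relation.
    set c : Fin (m + 1) → K := fun j => (l 0)⁻¹ * l j
    have hc : ∀ i < m + 1, ∑ j, c j * (⇑δ)^[i] (b j) = 0 := fun i hi => by
      simp only [c, mul_assoc, ← Finset.mul_sum, hl i hi, mul_zero]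
    have hc0 : c 0 = 1 := inv_mul_cancel₀ hl₀
    have hδc : (fun j => δ (c j)) = 0 :=
      eq_zero_of_head_eq_zero _
        (fun i hi => sum_deriv_mul_iterate_eq_zero δ c b i (hc i (by omega)) (hc (i + 1) (by omega)))
        (by simp [hc0])
    have := Fintype.linearIndependent_iff.mp hb (fun j => ⟨c j, congrFun hδc j⟩)
      (by simpa [Subfield.smul_def] using hc 0 (by omega)) 0
    simp [Subtype.ext_iff, hc0] at this

def wronskianMatrix {m : ℕ} (b : Fin m → K) : Matrix (Fin m) (Fin m) K :=
  Matrix.of fun i j => (⇑δ)^[i] (b j)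

theorem isUnit_wronskianMatrix {m : ℕ} {b : Fin m → K} (hb : LinearIndependent (constants δ) b) :
    IsUnit (wronskianMatrix δ b) := by
  rw [Matrix.isUnit_iff_isUnit_det, isUnit_iff_ne_zero]
  intro h
  obtain ⟨v, hv, hWv⟩ := Matrix.exists_mulVec_eq_zero_iff.mpr h
  refine hv (eq_zero_of_forall_sum_mul_iterate_eq_zero δ hb v fun i hi => ?_)
  simpa [wronskianMatrix, Matrix.mulVec, dotProduct, mul_comm] using congrFun hWv ⟨i, hi⟩

def hankelDet (n : ℕ) : MvPolynomial ℕ K :=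
  (Matrix.of fun i j : Fin (n + 1) => X (i + j : ℕ)).det

-- At the indicator of `x⁽ⁿ⁾` the Hankel matrix becomes the anti-diagonal permutation matrix.
theorem hankelDet_ne_zero (n : ℕ) : (hankelDet n : MvPolynomial ℕ K) ≠ 0 := by
  intro h
  have h₁ := congrArg (eval fun k => if k = n then (1 : K) else 0) h
  have hmat : (eval fun k => if k = n then (1 : K) else 0).mapMatrix
      (Matrix.of fun i j : Fin (n + 1) => X (i + j : ℕ)) =
        (1 : Matrix _ _ K).submatrix Fin.revPerm id := by
    ext i j
    simp only [RingHom.mapMatrix_apply, Matrix.map_apply, Matrix.of_apply, eval_X,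
      Matrix.submatrix_apply, Fin.revPerm_apply, id_eq, Matrix.one_apply, Fin.ext_iff, Fin.val_rev]
    congr 1
    exact propext (by omega)
  rw [hankelDet, RingHom.map_det, hmat, Matrix.det_permute, Matrix.det_one, mul_one,
    map_zero] at h₁
  rcases Int.units_eq_one_or (Equiv.Perm.sign (Fin.revPerm : Equiv.Perm (Fin (n + 1))))
    with h | h <;> simp [h] at h₁

theorem evalD_hankelDet_eq_zero [FiniteDimensional (constants δ) K] {n : ℕ}
    (hn : Module.finrank (constants δ) K ≤ n) (a : K) : evalD δ a (hankelDet n) = 0 := by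
  rw [evalD, hankelDet, RingHom.map_det, ← Matrix.exists_mulVec_eq_zero_iff]
  have hdep : ¬ LinearIndependent (constants δ) fun j : Fin (n + 1) => (⇑δ)^[j] a := fun h => by
    have := h.fintype_card_le_finrank
    simp only [Fintype.card_fin] at this
    omega
  obtain ⟨g, hg, j, hj⟩ := Fintype.not_linearIndependent_iff.mp hdep
  simp only [Subfield.smul_def, smul_eq_mul] at hg
  refine ⟨fun j => g j, fun h => hj (Subtype.ext (congrFun h j)), funext fun i => ?_⟩
  calc _ = ∑ j, (g j : K) * (⇑δ)^[i] ((⇑δ)^[j] a) := by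
        simp only [Matrix.mulVec, dotProduct, RingHom.mapMatrix_apply, Matrix.map_apply,
          Matrix.of_apply, eval_X, Function.iterate_add_apply, mul_comm]
    _ = (⇑δ)^[i] (∑ j, (g j : K) * (⇑δ)^[j] a) :=
        (iterate_sum_mul_of_mem_constants δ (fun j => (g j).2) _ i).symm
    _ = 0 := by rw [hg]; exact Function.iterate_fixed (map_zero δ) i

theorem exists_ne_zero_forall_evalD_eq_zero [FiniteDimensional (constants δ) K] :
    ∃ f : MvPolynomial ℕ K, f ≠ 0 ∧ ∀ a, evalD δ a f = 0 :=
  ⟨hankelDet _, hankelDet_ne_zero _, evalD_hankelDet_eq_zero δ le_rfl⟩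

theorem MvPolynomial.exists_forall_mem_eval_ne_zero {R σ : Type*} [CommRing R] [IsDomain R]
    {s : Set R} (hs : s.Infinite) {p : MvPolynomial σ R} (hp : p ≠ 0) :
    ∃ x : σ → R, (∀ i, x i ∈ s) ∧ eval x p ≠ 0 := by
  by_contra! h
  exact hp (funext_set (fun _ => s) (fun _ => hs) fun x hx => by simpa using h x fun i => hx i trivial)

theorem eval_bind₁_sum_iterate {m : ℕ} (b : Fin m → K) (f : MvPolynomial ℕ K) (y : Fin m → K) :
    eval y (bind₁ (fun k => ∑ j, C ((⇑δ)^[k] (b j)) * X j) f) =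
      eval (fun k => ∑ j, y j * (⇑δ)^[k] (b j)) f := by
  change aeval y _ = _
  rw [aeval_bind₁]
  simp [mul_comm]

theorem bind₁_sum_iterate_ne_zero [Infinite K] {m : ℕ} {b : Fin m → K}
    (hb : LinearIndependent (constants δ) b) {f : MvPolynomial ℕ K} (hf : f ≠ 0)
    (hvars : ∀ k ∈ f.vars, k < m) : bind₁ (fun k => ∑ j, C ((⇑δ)^[k] (b j)) * X j) f ≠ 0 := by
  intro h
  refine hf (MvPolynomial.funext fun x => ?_)
  obtain ⟨y, hy⟩ := Matrix.mulVec_surjective_iff_isUnit.mpr (isUnit_wronskianMatrix δ hb)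
    fun i => x i
  have hx : eval x f = eval (fun k => ∑ j, y j * (⇑δ)^[k] (b j)) f :=
    eval₂Hom_congr' rfl (fun k hk _ => by
      simpa [wronskianMatrix, Matrix.mulVec, dotProduct, mul_comm] using
        (congrFun hy ⟨k, hvars k hk⟩).symm) rfl
  rw [hx, ← eval_bind₁_sum_iterate, h, map_zero, map_zero]

theorem exists_evalD_ne_zero_of_not_finiteDimensional (hC : (constants δ : Set K).Infinite)
    (hK : ¬ FiniteDimensional (constants δ) K) {f : MvPolynomial ℕ K} (hf : f ≠ 0) :
    ∃ a, evalD δ a f ≠ 0 := by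
  have : Infinite K := Set.infinite_univ_iff.mp (hC.mono (Set.subset_univ _))
  have hvars : ∀ k ∈ f.vars, k < ordOf f + 1 := fun k hk =>
    Nat.lt_succ_of_le (Finset.le_sup (f := id) hk)
  have hrank : ((ordOf f + 1 : ℕ) : Cardinal) ≤ Module.rank (constants δ) K :=
    Cardinal.natCast_lt_aleph0.le.trans (not_lt.mp (mt Module.rank_lt_aleph0_iff.mp hK))
  obtain ⟨b, hb⟩ := exists_linearIndependent_of_le_rank hrank
  obtain ⟨c, hcC, hc⟩ :=
    exists_forall_mem_eval_ne_zero hC (bind₁_sum_iterate_ne_zero δ hb hf hvars)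
  refine ⟨∑ j, c j * b j, ?_⟩
  rwa [eval_bind₁_sum_iterate, ← funext (iterate_sum_mul_of_mem_constants δ hcC b)] at hc

theorem pow_mem_constants (p : ℕ) [CharP K p] (x : K) : x ^ p ∈ constants δ := by
  show δ (x ^ p) = 0
  simp [Derivation.leibniz_pow]

theorem constants_infinite (p : ℕ) [Fact p.Prime] [CharP K p] [Infinite K] :
    (constants δ : Set K).Infinite :=
  Set.infinite_of_injective_forall_mem (frobenius_inj K p) (pow_mem_constants δ p)

end

theorem stmt19 {K : Type*} [Field K] (p : ℕ) [Fact p.Prime] [CharP K p]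
    (δ : Derivation ℤ K K) :
    (∀ f : MvPolynomial ℕ K, f ≠ 0 → ∃ a : K, evalD δ a f ≠ 0) ↔
      ¬ FiniteDimensional (constants δ) K := by
  refine ⟨fun hnd hfd => ?_, fun hK f hf => ?_⟩
  · obtain ⟨f, hf, hvanish⟩ := exists_ne_zero_forall_evalD_eq_zero δ
    obtain ⟨a, ha⟩ := hnd f hf
    exact ha (hvanish a)
  · have : Infinite K := not_finite_iff_infinite.mp fun _ => hK Module.Finite.of_finite
    exact exists_evalD_ne_zero_of_not_finiteDimensional δ (constants_infinite δ p) hK hf
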